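/- Let μ be a probability measure on ℝ^d with ∫ ‖x‖² dμ(x) < ∞, let φ : ℝ^d → ℝ be a convex differentiable function whose gradient T = ∇φ is measurable and satisfies ∫ ‖T(x)‖² dμ(x) < ∞. Set A := ∫ ‖x‖² dμ, B := ∫ ⟨x, T(x)⟩ dμ, C := ∫ ‖T(x)‖² dμ. For a_1, b_1, a_2, b_2 ≥ 0 define S_j(x) := a_j x + b_j T(x), j = 1, 2. Then the infimum of ∫ ‖x − y‖² dγ(x,y) over all couplings γ of (S_1)_#μ and (S_2)_#μ equals the constant quadratic form (a_1 − a_2)² A + 2(a_1 − a_2)(b_1 − b_2) B + (b_1 − b_2)² C in the coordinate differences; in particular, the squared transport distance between any two points of the filling cone depends only on the differences of their affine coordinates (a, b) through this fixed quadratic form. -/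

import Mathlib

/-!
Pushing `μ` forward by `x ↦ (S₁ x, S₂ x)` gives a coupling of `S₁ # μ` and `S₂ # μ` with cost
`∫ ‖S₁ x - S₂ x‖² dμ`, which is the quadratic form because
`S₁ - S₂ = (a₁ - a₂) • id + (b₁ - b₂) • ∇φ`. This coupling is optimal. The gradient inequality of
the convex `φ` and Young's inequality for `‖·‖² / 2` give integrable potentials with
`⟪S₁ x, S₂ y⟫ ≤ f x + g y` and equality when `x = y`. A double Legendre transform moves them to
lower semicontinuous, hence measurable, potentials on the target space, so every coupling `γ`
satisfies `∫ ⟪u, v⟫ dγ ≤ ∫ ⟪S₁ x, S₂ x⟫ dμ`, while the second moments of `γ` are fixed by its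
marginals.
-/

open MeasureTheory Set
open scoped ENNReal RealInnerProductSpace Gradient

theorem two_mul_real_inner_le_norm_sq_add {E : Type*} [NormedAddCommGroup E]
    [InnerProductSpace ℝ E] (x y : E) : 2 * ⟪x, y⟫ ≤ ‖x‖ ^ 2 + ‖y‖ ^ 2 := by
  nlinarith [norm_sub_sq_real x y, sq_nonneg ‖x - y‖]

section ConvexGradient

variable {E : Type*} [NormedAddCommGroup E]

theorem ConvexOn.add_fderiv_sub_le [NormedSpace ℝ E] {φ : E → ℝ} {φ' : E →L[ℝ] ℝ} {x : E}
    (hφ : ConvexOn ℝ univ φ) (hx : HasFDerivAt φ φ' x) (y : E) : φ x + φ' (y - x) ≤ φ y := by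
  set ℓ := AffineMap.lineMap (k := ℝ) x y
  have hℓ : HasDerivAt ℓ (y - x) 0 := by
    rw [show (ℓ : ℝ → E) = fun t => t • (y - x) + x from
      funext (AffineMap.lineMap_apply_module' x y)]
    simpa using ((hasDerivAt_id (0 : ℝ)).smul_const (y - x)).add_const x
  have hψ : HasDerivAt (φ ∘ ℓ) (φ' (y - x)) 0 :=
    (by simpa [ℓ] using hx : HasFDerivAt φ φ' (ℓ 0)).comp_hasDerivAt 0 hℓ
  have := (hφ.comp_affineMap ℓ).le_slope_of_hasDerivAt trivial trivial one_pos hψ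
  simp only [slope_def_field, Function.comp_apply, AffineMap.lineMap_apply_zero,
    AffineMap.lineMap_apply_one, sub_zero, div_one, ℓ] at this
  linarith

theorem ConvexOn.add_inner_gradient_sub_le [InnerProductSpace ℝ E] [CompleteSpace E]
    {φ : E → ℝ} {x : E} (hφ : ConvexOn ℝ univ φ) (hx : DifferentiableAt ℝ φ x) (y : E) :
    φ x + ⟪∇ φ x, y - x⟫ ≤ φ y := by
  simpa using hφ.add_fderiv_sub_le (hasGradientAt_iff_hasFDerivAt.1 hx.hasGradientAt) y

end ConvexGradient

section FillingPotential

variable {E : Type*} [NormedAddCommGroup E] [InnerProductSpace ℝ E] [CompleteSpace E]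
  (φ : E → ℝ)

/-- Built so that each term of `⟪a₁ • x + b₁ • ∇φ x, a₂ • y + b₂ • ∇φ y⟫` is bounded by a
Fenchel–Young inequality that is an equality when `x = y`: for `‖·‖² / 2` in the `a₁ a₂` and
`b₁ b₂` terms, and for `φ` and `φ*` in the mixed terms, where `φ* (∇φ x) = ⟪x, ∇φ x⟫ - φ x`. -/
noncomputable def fillingPotential (a₁ b₁ a₂ b₂ : ℝ) (x : E) : ℝ :=
  a₁ * a₂ / 2 * ‖x‖ ^ 2 + a₁ * b₂ * φ x + a₂ * b₁ * (⟪x, ∇ φ x⟫ - φ x) +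
    b₁ * b₂ / 2 * ‖∇ φ x‖ ^ 2

theorem fillingPotential_add_swap (a₁ b₁ a₂ b₂ : ℝ) (x : E) :
    fillingPotential φ a₁ b₁ a₂ b₂ x + fillingPotential φ a₂ b₂ a₁ b₁ x =
      ⟪a₁ • x + b₁ • ∇ φ x, a₂ • x + b₂ • ∇ φ x⟫ := by
  simp only [fillingPotential, inner_add_left, inner_add_right, real_inner_smul_left,
    real_inner_smul_right, real_inner_self_eq_norm_sq, real_inner_comm x]
  ring

theorem inner_le_fillingPotential_add {a₁ b₁ a₂ b₂ : ℝ} (ha₁ : 0 ≤ a₁) (hb₁ : 0 ≤ b₁)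
    (ha₂ : 0 ≤ a₂) (hb₂ : 0 ≤ b₂) {φ : E → ℝ} (hφ : ConvexOn ℝ univ φ)
    (hdiff : Differentiable ℝ φ) (x y : E) :
    ⟪a₁ • x + b₁ • ∇ φ x, a₂ • y + b₂ • ∇ φ y⟫ ≤
      fillingPotential φ a₁ b₁ a₂ b₂ x + fillingPotential φ a₂ b₂ a₁ b₁ y := by
  have hxy := two_mul_real_inner_le_norm_sq_add x y
  have hTT := two_mul_real_inner_le_norm_sq_add (∇ φ x) (∇ φ y)
  have hxT := hφ.add_inner_gradient_sub_le (hdiff y) x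
  have hTy := hφ.add_inner_gradient_sub_le (hdiff x) y
  rw [inner_sub_right, real_inner_comm x, real_inner_comm y] at hxT
  rw [inner_sub_right, real_inner_comm x] at hTy
  simp only [fillingPotential, inner_add_left, inner_add_right, real_inner_smul_left,
    real_inner_smul_right]
  nlinarith [mul_le_mul_of_nonneg_left hxy (mul_nonneg ha₁ ha₂),
    mul_le_mul_of_nonneg_left hTT (mul_nonneg hb₁ hb₂),
    mul_le_mul_of_nonneg_left hxT (mul_nonneg ha₁ hb₂),
    mul_le_mul_of_nonneg_left hTy (mul_nonneg ha₂ hb₁)]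

end FillingPotential

section SquareIntegrable

variable {α E : Type*} [MeasurableSpace α] {μ : Measure α} [NormedAddCommGroup E]

theorem memLp_two_of_lintegral_sq_norm_lt_top {f : α → E} (hf : AEStronglyMeasurable f μ)
    (h : ∫⁻ a, ENNReal.ofReal (‖f a‖ ^ 2) ∂μ < ∞) : MemLp f 2 μ :=
  (memLp_two_iff_integrable_sq_norm hf).2
    ⟨hf.norm.pow 2, (hasFiniteIntegral_iff_ofReal (ae_of_all _ fun _ => by positivity)).2 h⟩

theorem MeasureTheory.MemLp.integrable_norm_sq {f : α → E} (hf : MemLp f 2 μ) :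
    Integrable (fun a => ‖f a‖ ^ 2) μ :=
  (memLp_two_iff_integrable_sq_norm hf.1).1 hf

variable [InnerProductSpace ℝ E]

theorem MeasureTheory.MemLp.integrable_inner {f g : α → E} (hf : MemLp f 2 μ) (hg : MemLp g 2 μ) :
    Integrable (fun a => ⟪f a, g a⟫) μ :=
  ((hf.integrable_norm_sq.add hg.integrable_norm_sq).div_const 2).mono' (hf.1.inner hg.1) <|
    ae_of_all _ fun a => by
      have := two_mul_real_inner_le_norm_sq_add (f a) (g a)
      have := two_mul_real_inner_le_norm_sq_add (f a) (-g a)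
      rw [inner_neg_right, norm_neg] at this
      simp only [Pi.add_apply, Real.norm_eq_abs, abs_le]
      constructor <;> linarith

theorem integral_norm_smul_add_smul_sq {f g : α → E} (hf : MemLp f 2 μ) (hg : MemLp g 2 μ)
    (a b : ℝ) :
    ∫ x, ‖a • f x + b • g x‖ ^ 2 ∂μ =
      a ^ 2 * ∫ x, ‖f x‖ ^ 2 ∂μ + 2 * a * b * ∫ x, ⟪f x, g x⟫ ∂μ +
        b ^ 2 * ∫ x, ‖g x‖ ^ 2 ∂μ := by
  have hpt : ∀ x, ‖a • f x + b • g x‖ ^ 2 =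
      a ^ 2 * ‖f x‖ ^ 2 + 2 * a * b * ⟪f x, g x⟫ + b ^ 2 * ‖g x‖ ^ 2 := fun x => by
    rw [norm_add_sq_real, norm_smul, norm_smul, real_inner_smul_left, real_inner_smul_right,
      mul_pow, mul_pow, Real.norm_eq_abs, Real.norm_eq_abs, sq_abs, sq_abs]
    ring
  have hff := hf.integrable_norm_sq.const_mul (a ^ 2)
  have hfg := (hf.integrable_inner hg).const_mul (2 * a * b)
  have hgg := hg.integrable_norm_sq.const_mul (b ^ 2)
  simp_rw [hpt]
  rw [integral_add ?_ hgg, integral_add hff hfg, integral_const_mul, integral_const_mul,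
    integral_const_mul]
  exact hff.add hfg

theorem integral_norm_sub_sq {f g : α → E} (hf : MemLp f 2 μ) (hg : MemLp g 2 μ) :
    ∫ x, ‖f x - g x‖ ^ 2 ∂μ =
      ∫ x, ‖f x‖ ^ 2 ∂μ + ∫ x, ‖g x‖ ^ 2 ∂μ - 2 * ∫ x, ⟪f x, g x⟫ ∂μ := by
  have h := integral_norm_smul_add_smul_sq hf hg 1 (-1)
  simp only [one_smul, neg_one_smul, ← sub_eq_add_neg, one_pow, neg_one_sq, one_mul] at h
  linarith

end SquareIntegrable

section FillingPotentialIntegrable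

variable {E : Type*} [NormedAddCommGroup E] [InnerProductSpace ℝ E] [CompleteSpace E]
  [MeasurableSpace E] [OpensMeasurableSpace E] {μ : Measure E} [IsFiniteMeasure μ]
  {φ : E → ℝ}

theorem ConvexOn.integrable_of_memLp_gradient (hφ : ConvexOn ℝ univ φ)
    (hdiff : Differentiable ℝ φ) (hid : MemLp id 2 μ) (hT : MemLp (∇ φ) 2 μ) :
    Integrable φ μ := by
  refine integrable_of_le_of_le (g₁ := fun x => φ 0 + ⟪∇ φ 0, x⟫)
    (g₂ := fun x => φ 0 + ⟪x, ∇ φ x⟫) hdiff.continuous.aestronglyMeasurable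
    (ae_of_all _ fun x => by simpa using hφ.add_inner_gradient_sub_le (hdiff 0) x)
    (ae_of_all _ fun x => ?_) ((integrable_const _).add ((hid.integrable one_le_two).const_inner _))
    ((integrable_const _).add (hid.integrable_inner hT))
  have := hφ.add_inner_gradient_sub_le (hdiff x) 0
  rw [zero_sub, inner_neg_right, real_inner_comm] at this
  dsimp only
  linarith

theorem integrable_fillingPotential (hφ : ConvexOn ℝ univ φ) (hdiff : Differentiable ℝ φ)
    (hid : MemLp id 2 μ) (hT : MemLp (∇ φ) 2 μ) (a₁ b₁ a₂ b₂ : ℝ) :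
    Integrable (fillingPotential φ a₁ b₁ a₂ b₂) μ := by
  have hφi := hφ.integrable_of_memLp_gradient hdiff hid hT
  exact (((hid.integrable_norm_sq.const_mul _).add (hφi.const_mul _)).add
    (((hid.integrable_inner hT).sub hφi).const_mul _)).add (hT.integrable_norm_sq.const_mul _)

end FillingPotentialIntegrable

section Pushforward

variable {X Z E F : Type*} [MeasurableSpace X] [MeasurableSpace Z] [MeasurableSpace E]
  [NormedAddCommGroup F] {μ : Measure X} {γ : Measure Z} {π : Z → E} {S : X → E}

theorem ae_mem_of_map_eq (hπ : Measurable π) (hS : AEMeasurable S μ) (h : γ.map π = μ.map S)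
    {s : Set E} (hs : MeasurableSet s) (hSs : ∀ x, S x ∈ s) : ∀ᵐ z ∂γ, π z ∈ s := by
  have hs' : ∀ᵐ y ∂γ.map π, y ∈ s := h ▸ (ae_map_iff hS hs).2 (ae_of_all _ hSs)
  exact (ae_map_iff hπ.aemeasurable hs).1 hs'

theorem memLp_comp_of_map_eq (hπ : Measurable π) (hS : AEMeasurable S μ)
    (h : γ.map π = μ.map S) {G : E → F} (hG : AEStronglyMeasurable G (μ.map S))
    {p : ℝ≥0∞} (hGS : MemLp (G ∘ S) p μ) : MemLp (G ∘ π) p γ := by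
  rw [← memLp_map_measure_iff hG hS, ← h] at hGS
  exact (memLp_map_measure_iff (h ▸ hG) hπ.aemeasurable).1 hGS

theorem integral_comp_of_map_eq [NormedSpace ℝ F] (hπ : Measurable π) (hS : AEMeasurable S μ)
    (h : γ.map π = μ.map S) {G : E → F} (hG : AEStronglyMeasurable G (μ.map S)) :
    ∫ z, G (π z) ∂γ = ∫ x, G (S x) ∂μ := by
  rw [← integral_map hS hG, ← h, integral_map hπ.aemeasurable (h ▸ hG)]

end Pushforward

theorem EReal.continuous_coe_sub_const (c : EReal) :
    Continuous fun t : ℝ => (t : EReal) - c := by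
  induction c with
  | bot => simpa [EReal.coe_sub_bot] using continuous_const
  | top => simpa [EReal.sub_top] using continuous_const
  | coe c =>
    simp only [← EReal.coe_sub]
    exact continuous_coe_real_ereal.comp (continuous_sub_right c)

theorem EReal.toReal_mem_Icc {a b : ℝ} {z : EReal} (ha : (a : EReal) ≤ z) (hb : z ≤ b) :
    z.toReal ∈ Icc a b :=
  ⟨by simpa using (EReal.toReal_le_toReal ha (EReal.coe_ne_bot a)
      (hb.trans_lt (EReal.coe_lt_top b)).ne),
    by simpa using (EReal.toReal_le_toReal hb (ha.trans_lt' (EReal.bot_lt_coe a)).ne'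
      (EReal.coe_ne_top b))⟩

section Legendre

variable {X E : Type*} [NormedAddCommGroup E] [InnerProductSpace ℝ E]

noncomputable def legendreTransform (G : E → EReal) (u : E) : EReal :=
  ⨆ v, ((⟪u, v⟫ : ℝ) : EReal) - G v

/-- The Legendre transform of `w ↦ inf {f x | S x = w}`. -/
noncomputable def legendreAlong (S : X → E) (f : X → ℝ) (v : E) : EReal :=
  ⨆ x, ((⟪S x, v⟫ - f x : ℝ) : EReal)

theorem lowerSemicontinuous_legendreTransform (G : E → EReal) :
    LowerSemicontinuous (legendreTransform G) :=
  lowerSemicontinuous_iSup fun v => ((EReal.continuous_coe_sub_const (G v)).comp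
    (continuous_id.inner continuous_const)).lowerSemicontinuous

theorem lowerSemicontinuous_legendreAlong (S : X → E) (f : X → ℝ) :
    LowerSemicontinuous (legendreAlong S f) :=
  lowerSemicontinuous_iSup fun _ => (continuous_coe_real_ereal.comp
    ((continuous_const.inner continuous_id).sub continuous_const)).lowerSemicontinuous

theorem coe_le_legendreTransform (G : E → EReal) (u : E) {v : E} {c : ℝ} (h : G v ≤ c) :
    ((⟪u, v⟫ - c : ℝ) : EReal) ≤ legendreTransform G u :=
  (EReal.coe_sub _ _ ▸ EReal.sub_le_sub le_rfl h).trans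
    (le_iSup (fun v => ((⟪u, v⟫ : ℝ) : EReal) - G v) v)

theorem inner_le_toReal_legendreTransform_add {G : E → EReal} {u v : E}
    (hu : legendreTransform G u ≠ ⊤) (hv : G v ≠ ⊤) (hv' : G v ≠ ⊥) :
    ⟪u, v⟫ ≤ (legendreTransform G u).toReal + (G v).toReal := by
  obtain ⟨r, hr⟩ : ∃ r : ℝ, G v = r := ⟨(G v).toReal, (EReal.coe_toReal hv hv').symm⟩
  have h := EReal.toReal_le_toReal (coe_le_legendreTransform G u hr.le) (EReal.coe_ne_bot _) hu
  rw [EReal.toReal_coe] at h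
  rw [hr, EReal.toReal_coe]
  linarith

theorem coe_le_legendreAlong (S : X → E) (f : X → ℝ) (x : X) (v : E) :
    ((⟪S x, v⟫ - f x : ℝ) : EReal) ≤ legendreAlong S f v :=
  le_iSup (fun x => ((⟪S x, v⟫ - f x : ℝ) : EReal)) x

theorem legendreAlong_le {S₁ S₂ : X → E} {f g : X → ℝ}
    (hfg : ∀ x y, ⟪S₁ x, S₂ y⟫ ≤ f x + g y) (y : X) : legendreAlong S₁ f (S₂ y) ≤ g y :=
  iSup_le fun x => EReal.coe_le_coe_iff.2 (by linarith [hfg x y])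

theorem legendreTransform_legendreAlong_le (S : X → E) (f : X → ℝ) (x : X) :
    legendreTransform (legendreAlong S f) (S x) ≤ f x :=
  iSup_le fun v => calc
    ((⟪S x, v⟫ : ℝ) : EReal) - legendreAlong S f v
      ≤ ((⟪S x, v⟫ : ℝ) : EReal) - ((⟪S x, v⟫ - f x : ℝ) : EReal) :=
        EReal.sub_le_sub le_rfl (coe_le_legendreAlong S f x v)
    _ = f x := by rw [← EReal.coe_sub, sub_sub_cancel]

theorem legendreAlong_ne_bot (S : X → E) (f : X → ℝ) (x₀ : X) (v : E) :
    legendreAlong S f v ≠ ⊥ :=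
  ((coe_le_legendreAlong S f x₀ v).trans_lt' (EReal.bot_lt_coe _)).ne'

theorem toReal_legendreAlong_mem_Icc {S₁ S₂ : X → E} {f g : X → ℝ}
    (hfg : ∀ x y, ⟪S₁ x, S₂ y⟫ ≤ f x + g y) (x₀ y : X) :
    (legendreAlong S₁ f (S₂ y)).toReal ∈ Icc (⟪S₁ x₀, S₂ y⟫ - f x₀) (g y) :=
  EReal.toReal_mem_Icc (coe_le_legendreAlong S₁ f x₀ _) (legendreAlong_le hfg y)

theorem toReal_legendreTransform_legendreAlong_mem_Icc {S₁ S₂ : X → E} {f g : X → ℝ}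
    (hfg : ∀ x y, ⟪S₁ x, S₂ y⟫ ≤ f x + g y) (x₀ x : X) :
    (legendreTransform (legendreAlong S₁ f) (S₁ x)).toReal ∈ Icc (⟪S₁ x, S₂ x₀⟫ - g x₀) (f x) :=
  EReal.toReal_mem_Icc (coe_le_legendreTransform _ _ (legendreAlong_le hfg x₀))
    (legendreTransform_legendreAlong_le S₁ f x)

end Legendre

section Duality

variable {X E : Type*} [MeasurableSpace X] {μ : Measure X} [NormedAddCommGroup E]
  [MeasurableSpace E] {S₁ S₂ : X → E} {γ : Measure (E × E)}

section

variable [BorelSpace E] [SecondCountableTopology E]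

theorem memLp_fst_of_map_eq (hS₁ : MemLp S₁ 2 μ) (hγ₁ : γ.map Prod.fst = μ.map S₁) :
    MemLp Prod.fst 2 γ :=
  memLp_comp_of_map_eq (G := id) measurable_fst hS₁.1.aemeasurable hγ₁
    aestronglyMeasurable_id hS₁

theorem memLp_snd_of_map_eq (hS₂ : MemLp S₂ 2 μ) (hγ₂ : γ.map Prod.snd = μ.map S₂) :
    MemLp Prod.snd 2 γ :=
  memLp_comp_of_map_eq (G := id) measurable_snd hS₂.1.aemeasurable hγ₂
    aestronglyMeasurable_id hS₂

end

variable [InnerProductSpace ℝ E]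

theorem integral_inner_le_of_ae_inner_le_add (hS₁ : AEMeasurable S₁ μ) (hS₂ : AEMeasurable S₂ μ)
    (hγ₁ : γ.map Prod.fst = μ.map S₁) (hγ₂ : γ.map Prod.snd = μ.map S₂) {F G : E → ℝ}
    (hF : Measurable F) (hG : Measurable G) (hFS : Integrable (F ∘ S₁) μ)
    (hGS : Integrable (G ∘ S₂) μ) (hγ : Integrable (fun p : E × E => ⟪p.1, p.2⟫) γ)
    (hle : ∀ᵐ p ∂γ, ⟪p.1, p.2⟫ ≤ F p.1 + G p.2) :
    ∫ p, ⟪p.1, p.2⟫ ∂γ ≤ ∫ x, F (S₁ x) ∂μ + ∫ x, G (S₂ x) ∂μ := by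
  have hFγ : Integrable (fun p : E × E => F p.1) γ := memLp_one_iff_integrable.1 <|
    memLp_comp_of_map_eq measurable_fst hS₁ hγ₁ hF.aestronglyMeasurable
      (memLp_one_iff_integrable.2 hFS)
  have hGγ : Integrable (fun p : E × E => G p.2) γ := memLp_one_iff_integrable.1 <|
    memLp_comp_of_map_eq measurable_snd hS₂ hγ₂ hG.aestronglyMeasurable
      (memLp_one_iff_integrable.2 hGS)
  calc ∫ p, ⟪p.1, p.2⟫ ∂γ ≤ ∫ p, F p.1 + G p.2 ∂γ := integral_mono_ae hγ (hFγ.add hGγ) hle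
    _ = _ := by
      rw [integral_add hFγ hGγ,
        integral_comp_of_map_eq measurable_fst hS₁ hγ₁ hF.aestronglyMeasurable,
        integral_comp_of_map_eq measurable_snd hS₂ hγ₂ hG.aestronglyMeasurable]

variable [BorelSpace E] [SecondCountableTopology E] {f g : X → ℝ}

theorem integral_inner_le_of_inner_le_add [IsProbabilityMeasure μ] (hS₁ : MemLp S₁ 2 μ)
    (hS₂ : MemLp S₂ 2 μ) (hf : Integrable f μ) (hg : Integrable g μ)
    (hfg : ∀ x y, ⟪S₁ x, S₂ y⟫ ≤ f x + g y) (hγ₁ : γ.map Prod.fst = μ.map S₁)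
    (hγ₂ : γ.map Prod.snd = μ.map S₂) :
    ∫ p, ⟪p.1, p.2⟫ ∂γ ≤ ∫ x, f x ∂μ + ∫ x, g x ∂μ := by
  obtain ⟨x₀⟩ := nonempty_of_isProbabilityMeasure μ
  set G := legendreAlong S₁ f
  set F := legendreTransform G
  have hF (x : X) := toReal_legendreTransform_legendreAlong_mem_Icc hfg x₀ x
  have hG (y : X) := toReal_legendreAlong_mem_Icc hfg x₀ y
  have hFm : Measurable F := (lowerSemicontinuous_legendreTransform G).measurable
  have hGm : Measurable G := (lowerSemicontinuous_legendreAlong S₁ f).measurable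
  have hFS : Integrable (fun x => (F (S₁ x)).toReal) μ :=
    integrable_of_le_of_le
      (hFm.ereal_toReal.comp_aemeasurable hS₁.1.aemeasurable).aestronglyMeasurable
      (ae_of_all _ fun x => (hF x).1) (ae_of_all _ fun x => (hF x).2)
      (((hS₁.integrable one_le_two).inner_const _).sub (integrable_const _)) hf
  have hGS : Integrable (fun x => (G (S₂ x)).toReal) μ :=
    integrable_of_le_of_le
      (hGm.ereal_toReal.comp_aemeasurable hS₂.1.aemeasurable).aestronglyMeasurable
      (ae_of_all _ fun x => (hG x).1) (ae_of_all _ fun x => (hG x).2)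
      (((hS₂.integrable one_le_two).const_inner _).sub (integrable_const _)) hg
  have hF_fin : ∀ᵐ p ∂γ, p.1 ∈ F ⁻¹' {⊤}ᶜ :=
    ae_mem_of_map_eq measurable_fst hS₁.1.aemeasurable hγ₁
      (hFm (measurableSet_singleton ⊤).compl)
      fun x => ((legendreTransform_legendreAlong_le S₁ f x).trans_lt (EReal.coe_lt_top _)).ne
  have hG_fin : ∀ᵐ p ∂γ, p.2 ∈ G ⁻¹' {⊤}ᶜ :=
    ae_mem_of_map_eq measurable_snd hS₂.1.aemeasurable hγ₂
      (hGm (measurableSet_singleton ⊤).compl)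
      fun y => ((legendreAlong_le hfg y).trans_lt (EReal.coe_lt_top _)).ne
  calc ∫ p, ⟪p.1, p.2⟫ ∂γ ≤ ∫ x, (F (S₁ x)).toReal ∂μ + ∫ x, (G (S₂ x)).toReal ∂μ := by
        refine integral_inner_le_of_ae_inner_le_add hS₁.1.aemeasurable hS₂.1.aemeasurable hγ₁
          hγ₂ hFm.ereal_toReal hGm.ereal_toReal hFS hGS
          ((memLp_fst_of_map_eq hS₁ hγ₁).integrable_inner (memLp_snd_of_map_eq hS₂ hγ₂)) ?_
        filter_upwards [hF_fin, hG_fin] with p hp₁ hp₂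
        exact inner_le_toReal_legendreTransform_add hp₁ hp₂ (legendreAlong_ne_bot S₁ f x₀ p.2)
    _ ≤ ∫ x, f x ∂μ + ∫ x, g x ∂μ :=
        add_le_add (integral_mono hFS hf fun x => (hF x).2) (integral_mono hGS hg fun y => (hG y).2)

end Duality

section TransportCost

variable {X E : Type*} [MeasurableSpace X] {μ : Measure X} [NormedAddCommGroup E]
  [MeasurableSpace E]

noncomputable def quadraticTransportCost (ν₁ ν₂ : Measure E) : ℝ≥0∞ :=
  sInf {c : ℝ≥0∞ | ∃ γ : Measure (E × E), IsProbabilityMeasure γ ∧ γ.map Prod.fst = ν₁ ∧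
    γ.map Prod.snd = ν₂ ∧ c = ∫⁻ p, ENNReal.ofReal (‖p.1 - p.2‖ ^ 2) ∂γ}

variable [BorelSpace E] [SecondCountableTopology E] {S₁ S₂ : X → E}

theorem quadraticTransportCost_map_le [IsProbabilityMeasure μ] (hS₁ : AEMeasurable S₁ μ)
    (hS₂ : AEMeasurable S₂ μ) :
    quadraticTransportCost (μ.map S₁) (μ.map S₂) ≤
      ∫⁻ x, ENNReal.ofReal (‖S₁ x - S₂ x‖ ^ 2) ∂μ := by
  have hS := hS₁.prodMk hS₂
  refine sInf_le ⟨μ.map fun x => (S₁ x, S₂ x), Measure.isProbabilityMeasure_map hS, ?_, ?_, ?_⟩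
  · rw [AEMeasurable.map_map_of_aemeasurable measurable_fst.aemeasurable hS]; rfl
  · rw [AEMeasurable.map_map_of_aemeasurable measurable_snd.aemeasurable hS]; rfl
  · rw [lintegral_map' (by fun_prop) hS]

variable [InnerProductSpace ℝ E] [IsProbabilityMeasure μ] {f g : X → ℝ}

theorem ofReal_integral_le_lintegral_of_inner_le_add (hS₁ : MemLp S₁ 2 μ) (hS₂ : MemLp S₂ 2 μ)
    (hf : Integrable f μ) (hg : Integrable g μ) (hfg : ∀ x y, ⟪S₁ x, S₂ y⟫ ≤ f x + g y)
    (hdiag : ∀ x, f x + g x = ⟪S₁ x, S₂ x⟫) {γ : Measure (E × E)}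
    (hγ₁ : γ.map Prod.fst = μ.map S₁) (hγ₂ : γ.map Prod.snd = μ.map S₂) :
    ENNReal.ofReal (∫ x, ‖S₁ x - S₂ x‖ ^ 2 ∂μ) ≤
      ∫⁻ p, ENNReal.ofReal (‖p.1 - p.2‖ ^ 2) ∂γ := by
  have h₁ := memLp_fst_of_map_eq hS₁ hγ₁
  have h₂ := memLp_snd_of_map_eq hS₂ hγ₂
  have hcost : Integrable (fun p : E × E => ‖p.1 - p.2‖ ^ 2) γ := (h₁.sub h₂).integrable_norm_sq
  rw [← ofReal_integral_eq_lintegral_ofReal hcost (ae_of_all _ fun _ => by positivity)]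
  refine ENNReal.ofReal_le_ofReal ?_
  have hcross := integral_inner_le_of_inner_le_add hS₁ hS₂ hf hg hfg hγ₁ hγ₂
  rw [← integral_add hf hg] at hcross
  simp_rw [hdiag] at hcross
  have hn₁ : ∫ p, ‖p.1‖ ^ 2 ∂γ = ∫ x, ‖S₁ x‖ ^ 2 ∂μ := integral_comp_of_map_eq measurable_fst
    hS₁.1.aemeasurable hγ₁ (continuous_norm.pow 2).aestronglyMeasurable
  have hn₂ : ∫ p, ‖p.2‖ ^ 2 ∂γ = ∫ x, ‖S₂ x‖ ^ 2 ∂μ := integral_comp_of_map_eq measurable_snd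
    hS₂.1.aemeasurable hγ₂ (continuous_norm.pow 2).aestronglyMeasurable
  rw [integral_norm_sub_sq h₁ h₂, integral_norm_sub_sq hS₁ hS₂, hn₁, hn₂]
  linarith

theorem quadraticTransportCost_map_eq_of_inner_le_add (hS₁ : MemLp S₁ 2 μ)
    (hS₂ : MemLp S₂ 2 μ) (hf : Integrable f μ) (hg : Integrable g μ)
    (hfg : ∀ x y, ⟪S₁ x, S₂ y⟫ ≤ f x + g y) (hdiag : ∀ x, f x + g x = ⟪S₁ x, S₂ x⟫) :
    quadraticTransportCost (μ.map S₁) (μ.map S₂) =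
      ENNReal.ofReal (∫ x, ‖S₁ x - S₂ x‖ ^ 2 ∂μ) := by
  have hcost : Integrable (fun x => ‖S₁ x - S₂ x‖ ^ 2) μ := (hS₁.sub hS₂).integrable_norm_sq
  refine le_antisymm ?_ (le_sInf ?_)
  · rw [ofReal_integral_eq_lintegral_ofReal hcost (ae_of_all _ fun _ => by positivity)]
    exact quadraticTransportCost_map_le hS₁.1.aemeasurable hS₂.1.aemeasurable
  · rintro c ⟨γ, -, hγ₁, hγ₂, rfl⟩
    exact ofReal_integral_le_lintegral_of_inner_le_add hS₁ hS₂ hf hg hfg hdiag hγ₁ hγ₂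

end TransportCost

/-- With `A = ∫ ‖x‖² dμ`, `B = ∫ ⟨x, T x⟩ dμ`, `C = ∫ ‖T x‖² dμ`, the
infimum of `∫ ‖x - y‖² dγ` over couplings `γ` of `(S₁)_#μ` and `(S₂)_#μ` (where
`Sⱼ x = aⱼ x + bⱼ T x`, `aⱼ, bⱼ ≥ 0`) equals the fixed quadratic form
`(a₁-a₂)² A + 2 (a₁-a₂)(b₁-b₂) B + (b₁-b₂)² C` in the coordinate differences. -/
theorem transport_cost_quadratic_form_on_filling_cone
    (d : ℕ) (μ : Measure (EuclideanSpace ℝ (Fin d))) [IsProbabilityMeasure μ]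
    (hμ2 : ∫⁻ x, ENNReal.ofReal (‖x‖ ^ 2) ∂μ < ⊤)
    (φ : EuclideanSpace ℝ (Fin d) → ℝ)
    (hconv : ConvexOn ℝ Set.univ φ) (hdiff : Differentiable ℝ φ)
    (hTmeas : Measurable fun x => gradient φ x)
    (hT2 : ∫⁻ x, ENNReal.ofReal (‖gradient φ x‖ ^ 2) ∂μ < ⊤)
    (A B C : ℝ)
    (hA : A = ∫ x, ‖x‖ ^ 2 ∂μ)
    (hB : B = ∫ x, (inner ℝ x (gradient φ x) : ℝ) ∂μ)
    (hC : C = ∫ x, ‖gradient φ x‖ ^ 2 ∂μ)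
    (a₁ b₁ a₂ b₂ : ℝ) (ha₁ : 0 ≤ a₁) (hb₁ : 0 ≤ b₁) (ha₂ : 0 ≤ a₂) (hb₂ : 0 ≤ b₂)
    (S₁ S₂ : EuclideanSpace ℝ (Fin d) → EuclideanSpace ℝ (Fin d))
    (hS₁ : ∀ x, S₁ x = a₁ • x + b₁ • gradient φ x)
    (hS₂ : ∀ x, S₂ x = a₂ • x + b₂ • gradient φ x) :
    sInf {c : ℝ≥0∞ |
        ∃ γ : Measure (EuclideanSpace ℝ (Fin d) × EuclideanSpace ℝ (Fin d)),
          IsProbabilityMeasure γ ∧ γ.map Prod.fst = μ.map S₁ ∧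
          γ.map Prod.snd = μ.map S₂ ∧
          c = ∫⁻ p, ENNReal.ofReal (‖p.1 - p.2‖ ^ 2) ∂γ}
      = ENNReal.ofReal
          ((a₁ - a₂) ^ 2 * A + 2 * (a₁ - a₂) * (b₁ - b₂) * B + (b₁ - b₂) ^ 2 * C) := by
  have hid : MemLp (fun x => x) 2 μ :=
    memLp_two_of_lintegral_sq_norm_lt_top aestronglyMeasurable_id hμ2
  have hT : MemLp (∇ φ) 2 μ :=
    memLp_two_of_lintegral_sq_norm_lt_top hTmeas.aestronglyMeasurable hT2
  obtain rfl : S₁ = fun x => a₁ • x + b₁ • ∇ φ x := funext hS₁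
  obtain rfl : S₂ = fun x => a₂ • x + b₂ • ∇ φ x := funext hS₂
  have hS (a b : ℝ) : MemLp (fun x => a • x + b • ∇ φ x) 2 μ :=
    (hid.const_smul a).add (hT.const_smul b)
  have hP (a b a' b' : ℝ) := integrable_fillingPotential hconv hdiff hid hT a b a' b'
  change quadraticTransportCost _ _ = _
  rw [quadraticTransportCost_map_eq_of_inner_le_add (hS a₁ b₁) (hS a₂ b₂)
    (hP a₁ b₁ a₂ b₂) (hP a₂ b₂ a₁ b₁)
    (inner_le_fillingPotential_add ha₁ hb₁ ha₂ hb₂ hconv hdiff)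
    (fillingPotential_add_swap φ a₁ b₁ a₂ b₂)]
  have hsub (x : EuclideanSpace ℝ (Fin d)) : a₁ • x + b₁ • ∇ φ x - (a₂ • x + b₂ • ∇ φ x) =
      (a₁ - a₂) • x + (b₁ - b₂) • ∇ φ x := by module
  simp_rw [hsub]
  rw [integral_norm_smul_add_smul_sq hid hT, hA, hB, hC]
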